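/- arXiv:2207.00955 — 4 statements merged into one kernel-verified Lean document; each statement's English description precedes it below -/
import Mathlib

section
/- Fix H > 0 and c > 0, and let f(t) = exp(H t) + c. Then: (i) f''(t) > 0 for all t ∈ ℝ (so the spacetime is inflationary at every time); (ii) f'(t) > 0 for all t (f is strictly increasing); (iii) f(t) > c for all t while inf_ℝ f = c > 0; and yet (iv) for every b ∈ ℝ, lim_{a → −∞} (1/(b−a)) ∫_a^b f'(t)/f(t) dt = 0. -/
open Real Filter Topology intervalIntegral

/-!
The integrand `f' / f` is the derivative of `log ∘ f`, so the average of the Hubble parameter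
over `[a, b]` is `(log f(b) - log f(a)) / (b - a)`. As `a → -∞`, `f(a) → c > 0`, so the numerator
stays bounded while the length of the interval diverges: the past-asymptotic average is `0`,
although `f'' = H² e^{Ht} > 0` everywhere.
-/

theorem tendsto_one_div_sub_mul_sub_atBot {g : ℝ → ℝ} {L : ℝ} (hg : Tendsto g atBot (𝓝 L))
    (b : ℝ) : Tendsto (fun a => 1 / (b - a) * (g b - g a)) atBot (𝓝 0) := by
  have hlen : Tendsto (fun a : ℝ => b - a) atBot atTop :=
    tendsto_atTop_add_const_left atBot b tendsto_neg_atBot_atTop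
  have hinv : Tendsto (fun a : ℝ => 1 / (b - a)) atBot (𝓝 0) :=
    hlen.inv_tendsto_atTop.congr fun a => (one_div (b - a)).symm
  simpa using hinv.mul (tendsto_const_nhds.sub hg : Tendsto (fun a => g b - g a) atBot _)

theorem integral_deriv_div_eq_log_sub_log {f : ℝ → ℝ} (hf : ContDiff ℝ 1 f)
    (hne : ∀ t, f t ≠ 0) (a b : ℝ) :
    ∫ t in a..b, deriv f t / f t = log (f b) - log (f a) := by
  have hdiff : Differentiable ℝ f := hf.differentiable one_ne_zero
  have hcont : Continuous fun t => deriv f t / f t :=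
    (hf.continuous_deriv le_rfl).div hdiff.continuous hne
  exact integral_eq_sub_of_hasDerivAt (fun t _ => (hdiff t).hasDerivAt.log (hne t))
    (hcont.intervalIntegrable a b)

theorem tendsto_average_deriv_div_atBot {f : ℝ → ℝ} (hf : ContDiff ℝ 1 f)
    (hne : ∀ t, f t ≠ 0) {L : ℝ} (hL : Tendsto f atBot (𝓝 L)) (hL0 : L ≠ 0) (b : ℝ) :
    Tendsto (fun a => 1 / (b - a) * ∫ t in a..b, deriv f t / f t) atBot (𝓝 0) := by
  simp_rw [integral_deriv_div_eq_log_sub_log hf hne]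
  exact tendsto_one_div_sub_mul_sub_atBot (((continuousAt_log hL0).tendsto).comp hL) b

section ExpAddConst

variable (H c : ℝ)

theorem deriv_exp_mul_add_const :
    deriv (fun t => exp (H * t) + c) = fun t => H * exp (H * t) := by
  rw [deriv_add_const', ← iteratedDeriv_one, iteratedDeriv_exp_const_mul]
  simp only [pow_one]

theorem deriv_deriv_exp_mul_add_const :
    deriv (deriv fun t => exp (H * t) + c) = fun t => H ^ 2 * exp (H * t) := by
  rw [deriv_add_const', ← iteratedDeriv_one, ← iteratedDeriv_succ', iteratedDeriv_exp_const_mul]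

theorem tendsto_exp_mul_add_const_atBot (hH : 0 < H) :
    Tendsto (fun t => exp (H * t) + c) atBot (𝓝 c) := by
  simpa using (tendsto_exp_atBot.comp (tendsto_id.const_mul_atBot hH)).add_const c

end ExpAddConst

/-- For `f t = exp (H t) + c` with `H, c > 0`: `f'' > 0` everywhere (eternal
inflation), `f' > 0` everywhere, `f > c` with `inf f = c > 0`, and yet the
past-asymptotic averaged Hubble parameter vanishes. -/
theorem eternally_inflating_example (H c : ℝ) (hH : 0 < H) (hc : 0 < c)
    (f : ℝ → ℝ) (hf : f = fun t : ℝ => Real.exp (H * t) + c) :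
    (∀ t : ℝ, 0 < deriv (deriv f) t) ∧
    (∀ t : ℝ, 0 < deriv f t) ∧
    (∀ t : ℝ, c < f t) ∧
    (⨅ t : ℝ, f t) = c ∧ 0 < c ∧
    (∀ b : ℝ, Tendsto (fun a : ℝ => (1 / (b - a)) * ∫ t in a..b, deriv f t / f t)
      atBot (𝓝 0)) := by
  subst hf
  have hf_gt : ∀ t, c < exp (H * t) + c := fun t => lt_add_of_pos_left c (exp_pos _)
  have hmono : Monotone fun t => exp (H * t) + c := fun s t hst =>
    add_le_add_left (exp_le_exp.2 (mul_le_mul_of_nonneg_left hst hH.le)) c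
  have hlim := tendsto_exp_mul_add_const_atBot H c hH
  refine ⟨fun t => ?_, fun t => ?_, hf_gt, (isGLB_of_tendsto_atBot hmono hlim).ciInf_eq, hc,
    tendsto_average_deriv_div_atBot (by fun_prop) (fun t => (hc.trans (hf_gt t)).ne')
      hlim hc.ne'⟩
  · rw [deriv_deriv_exp_mul_add_const]; positivity
  · rw [deriv_exp_mul_add_const]; positivity
end

section
/- Fix H > 0 and c > 0, and let f(t) = exp(H t) + c. Then for all real t_i < t_f, the averaged Hubble parameter satisfies 0 < (1/(t_f − t_i)) ∫_{t_i}^{t_f} f'(t)/f(t) dt < H·exp(H t_f)/(exp(H t_f) + c) < H. -/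
/-!
The Hubble parameter of `exp (H t) + c` is `H e^{Ht} / (e^{Ht} + c)`, which is positive, strictly
increasing in `t` and below `H`. The average of a positive function is positive, and the average of
a strictly increasing continuous function over `[t_i, t_f]` is strictly below its value at `t_f`.
-/

open Real Filter Topology intervalIntegral

noncomputable def hubbleParameter (f : ℝ → ℝ) (t : ℝ) : ℝ := deriv f t / f t

lemma intervalAverage_pos {g : ℝ → ℝ} {a b : ℝ} (hab : a < b)
    (hg : IntervalIntegrable g MeasureTheory.volume a b) (hpos : ∀ x, 0 < g x) :
    0 < 1 / (b - a) * ∫ x in a..b, g x := by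
  have hint : 0 < ∫ x in a..b, g x := intervalIntegral_pos_of_pos hg hpos hab
  have hlen : 0 < b - a := sub_pos.mpr hab
  positivity

lemma intervalAverage_lt_of_strictMonoOn {g : ℝ → ℝ} {a b : ℝ} (hab : a < b)
    (hg : ContinuousOn g (Set.Icc a b)) (hmono : StrictMonoOn g (Set.Icc a b)) :
    1 / (b - a) * ∫ x in a..b, g x < g b := by
  have ha : a ∈ Set.Icc a b := Set.left_mem_Icc.mpr hab.le
  have hb : b ∈ Set.Icc a b := Set.right_mem_Icc.mpr hab.le
  have hint : ∫ x in a..b, g x < ∫ _ in a..b, g b :=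
    integral_lt_integral_of_continuousOn_of_le_of_exists_lt hab hg continuousOn_const
      (fun x hx => hmono.monotoneOn (Set.Ioc_subset_Icc_self hx) hb hx.2)
      ⟨a, ha, hmono ha hb hab⟩
  have hlen : 0 < b - a := sub_pos.mpr hab
  rw [integral_const, smul_eq_mul] at hint
  calc 1 / (b - a) * ∫ x in a..b, g x < 1 / (b - a) * ((b - a) * g b) := by gcongr
    _ = g b := by field_simp

lemma hubbleParameter_exp_add_const (H c : ℝ) :
    hubbleParameter (fun t => exp (H * t) + c) = fun t => H * exp (H * t) / (exp (H * t) + c) := by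
  funext t
  have hderiv : HasDerivAt (fun t => exp (H * t) + c) (exp (H * t) * H) t :=
    (hasDerivAt_const_mul H).exp.add_const c
  rw [hubbleParameter, hderiv.deriv, mul_comm]

lemma strictMono_mul_exp_div_exp_add {H c : ℝ} (hH : 0 < H) (hc : 0 < c) :
    StrictMono fun t => H * exp (H * t) / (exp (H * t) + c) := by
  intro s t hst
  have hexp : exp (H * s) < exp (H * t) := exp_lt_exp.mpr (mul_lt_mul_of_pos_left hst hH)
  dsimp only
  rw [div_lt_div_iff₀ (by positivity) (by positivity)]
  nlinarith [mul_lt_mul_of_pos_left hexp (mul_pos hH hc)]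

lemma mul_exp_div_exp_add_lt {H c : ℝ} (hH : 0 < H) (hc : 0 < c) (t : ℝ) :
    H * exp (H * t) / (exp (H * t) + c) < H := by
  rw [mul_div_assoc]
  exact mul_lt_of_lt_one_right hH ((div_lt_one (by positivity)).mpr (lt_add_of_pos_right _ hc))

/-- For `f t = exp (H t) + c` with `H, c > 0`, the averaged Hubble parameter
over any compact interval `[t_i, t_f]` is strictly positive and strictly
bounded above by `H · exp (H t_f) / (exp (H t_f) + c) < H`. -/
theorem Havg_bounds_eternal_inflation (H c : ℝ) (hH : 0 < H) (hc : 0 < c)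
    (f : ℝ → ℝ) (hf : f = fun t : ℝ => Real.exp (H * t) + c)
    (ti tf : ℝ) (hlt : ti < tf) :
    0 < (1 / (tf - ti)) * ∫ t in ti..tf, deriv f t / f t ∧
    (1 / (tf - ti)) * (∫ t in ti..tf, deriv f t / f t) <
      H * Real.exp (H * tf) / (Real.exp (H * tf) + c) ∧
    H * Real.exp (H * tf) / (Real.exp (H * tf) + c) < H := by
  change 0 < 1 / (tf - ti) * ∫ t in ti..tf, hubbleParameter f t ∧
    1 / (tf - ti) * (∫ t in ti..tf, hubbleParameter f t) < _ ∧ _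
  subst hf
  rw [hubbleParameter_exp_add_const]
  have hcont : Continuous fun t => H * exp (H * t) / (exp (H * t) + c) := by
    fun_prop (disch := exact fun t => by positivity)
  exact ⟨intervalAverage_pos hlt (hcont.intervalIntegrable _ _) fun t => by positivity,
    intervalAverage_lt_of_strictMonoOn hlt hcont.continuousOn
      ((strictMono_mul_exp_div_exp_add hH hc).strictMonoOn _),
    mul_exp_div_exp_add_lt hH hc tf⟩
end

section
/- Let H > 0, c > 0, and let f : ℝ → ℝ be twice differentiable with f(t) > 0 for all t, f(t) = c for all t ≤ −1, and f(t) = exp(H t) for all t ≥ 0. Then there exists t ∈ (−1, 0) at which the derivative of the Hubble parameter h(t) = f'(t)/f(t) satisfies h'(t) = H > 0; in particular h' > 0 somewhere in the transition region. -/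
open Real

/-!
The Hubble parameter `h = f'/f` vanishes at `t = -1`, where `f` is still constant, and equals
`H` at `t = 0`, where `f` has become `exp (H t)`; by the mean value theorem `h'` takes the
value `(H - 0) / (0 - (-1)) = H` somewhere in between.
-/

noncomputable def hubble (f : ℝ → ℝ) (t : ℝ) : ℝ := deriv f t / f t

theorem differentiable_hubble {f : ℝ → ℝ} (hf0 : ∀ t, f t ≠ 0) (hf : Differentiable ℝ f)
    (hf' : Differentiable ℝ (deriv f)) : Differentiable ℝ (hubble f) := fun t =>
  (hf' t).div (hf t) (hf0 t)

theorem deriv_eq_of_eqOn {𝕜 F : Type*} [NontriviallyNormedField 𝕜] [NormedAddCommGroup F]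
    [NormedSpace 𝕜 F] {f g : 𝕜 → F} {s : Set 𝕜} {a : 𝕜} {g' : F}
    (hf : DifferentiableAt 𝕜 f a) (hs : UniqueDiffWithinAt 𝕜 s a) (ha : a ∈ s)
    (hfg : Set.EqOn f g s) (hg : HasDerivWithinAt g g' s a) : deriv f a = g' :=
  (hf.derivWithin hs).symm.trans ((hg.congr hfg (hfg ha)).derivWithin hs)

theorem hubble_eq_zero_of_eqOn_Iic {f : ℝ → ℝ} {a c : ℝ} (hf : DifferentiableAt ℝ f a)
    (hconst : Set.EqOn f (fun _ => c) (Set.Iic a)) : hubble f a = 0 := by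
  rw [hubble, deriv_eq_of_eqOn hf (uniqueDiffOn_Iic a a Set.self_mem_Iic) Set.self_mem_Iic hconst
    (hasDerivWithinAt_const a _ c), zero_div]

theorem hubble_eq_of_eqOn_Ici_exp {f : ℝ → ℝ} {a H : ℝ} (hf : DifferentiableAt ℝ f a)
    (hdS : Set.EqOn f (fun t => exp (H * t)) (Set.Ici a)) : hubble f a = H := by
  have hexp : HasDerivAt (fun t => exp (H * t)) (exp (H * a) * H) a := by
    simpa using ((hasDerivAt_id a).const_mul H).exp
  rw [hubble, deriv_eq_of_eqOn hf (uniqueDiffOn_Ici a a Set.self_mem_Ici) Set.self_mem_Ici hdS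
    hexp.hasDerivWithinAt, hdS Set.self_mem_Ici, mul_div_cancel_left₀ _ (exp_pos _).ne']

theorem transition_violates_NEC_general (H c : ℝ) (hH : 0 < H)
    (f : ℝ → ℝ) (hpos : ∀ t : ℝ, 0 < f t)
    (hdiff : ∀ t : ℝ, DifferentiableAt ℝ f t)
    (hdiff2 : ∀ t : ℝ, DifferentiableAt ℝ (deriv f) t)
    (hpast : ∀ t : ℝ, t ≤ -1 → f t = c)
    (hdS : ∀ t : ℝ, 0 ≤ t → f t = Real.exp (H * t)) :
    ∃ t ∈ Set.Ioo (-1 : ℝ) 0,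
      deriv (fun s : ℝ => deriv f s / f s) t = H ∧
      0 < deriv (fun s : ℝ => deriv f s / f s) t := by
  have hh : Differentiable ℝ (hubble f) := differentiable_hubble (fun t => (hpos t).ne') hdiff hdiff2
  have hm1 : hubble f (-1) = 0 := hubble_eq_zero_of_eqOn_Iic (hdiff _) hpast
  have h0 : hubble f 0 = H := hubble_eq_of_eqOn_Ici_exp (hdiff _) hdS
  obtain ⟨t, ht, hslope⟩ :=
    exists_deriv_eq_slope (hubble f) neg_one_lt_zero hh.continuous.continuousOn hh.differentiableOn
  have hderiv : deriv (hubble f) t = H := by rw [hslope, h0, hm1]; norm_num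
  exact ⟨t, ht, hderiv, hderiv ▸ hH⟩

/-- Any twice differentiable positive scale factor gluing a loitering phase
(`f = c` for `t ≤ -1`) to a de Sitter phase (`f = exp (H t)` for `t ≥ 0`) has
a point in the transition region `(-1, 0)` where the derivative of the Hubble
parameter `h = f'/f` equals `H > 0`; in particular `h' > 0` somewhere there,
so the NEC/WEC are violated in the transition zone. -/
theorem transition_violates_NEC (H c : ℝ) (hH : 0 < H) (hc : 0 < c)
    (f : ℝ → ℝ) (hpos : ∀ t : ℝ, 0 < f t)
    (hdiff : ∀ t : ℝ, DifferentiableAt ℝ f t)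
    (hdiff2 : ∀ t : ℝ, DifferentiableAt ℝ (deriv f) t)
    (hpast : ∀ t : ℝ, t ≤ -1 → f t = c)
    (hdS : ∀ t : ℝ, 0 ≤ t → f t = Real.exp (H * t)) :
    ∃ t ∈ Set.Ioo (-1 : ℝ) 0,
      deriv (fun s : ℝ => deriv f s / f s) t = H ∧
      0 < deriv (fun s : ℝ => deriv f s / f s) t :=
  transition_violates_NEC_general H c hH f hpos hdiff hdiff2 hpast hdS
end

section
/- Let H > 0, 0 < c < 1, and let f : ℝ → ℝ be continuously differentiable, monotone nondecreasing, with f(t) = c for all t ≤ −1 and f(t) = exp(H t) for all t ≥ 0. Then simultaneously: (i) there is some t₁ (e.g. any t₁ > 0) with f''(t₁) > 0, so the associated GFRW is an inflationary spacetime; (ii) there exist a < b with (1/(b−a)) ∫_a^b f'(t)/f(t) dt = H > 0, so the averaged Hubble parameter is strictly positive over some compact interval; and (iii) f(t) ≥ c > 0 for all t, so by Sánchez's completeness criterion all four completeness integrals ∫_{±∞}^{t₀} f dt and ∫_{±∞}^{t₀} f/√(f²+1) dt diverge for every t₀. -/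
/-!
Past the loitering era `f` is a pure de Sitter factor `exp (H t)`, so `f'' = H² f > 0` and
`f'/f = H` there. Monotonicity pins `f ≥ c > 0` everywhere, hence also
`f / √(f² + 1) ≥ c / √(c² + 1) > 0`; an integrand bounded below by a positive constant has
integrals growing at least linearly in both time directions, so all four completeness integrals
diverge.
-/

open Real Filter Topology intervalIntegral

section LowerBoundedIntegrals

variable {g : ℝ → ℝ} {m : ℝ}

theorem tendsto_integral_atTop_of_le (hg : ∀ a b, IntervalIntegrable g MeasureTheory.volume a b)
    (hm : 0 < m) (hgm : ∀ t, m ≤ g t) (t₀ : ℝ) :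
    Tendsto (fun B : ℝ => ∫ t in t₀..B, g t) atTop atTop := by
  have hlin : Tendsto (fun B : ℝ => m * (B - t₀)) atTop atTop := by
    simpa [sub_eq_add_neg] using
      (tendsto_atTop_add_const_right atTop (-t₀) tendsto_id).const_mul_atTop hm
  refine tendsto_atTop_mono' atTop ?_ hlin
  filter_upwards [eventually_ge_atTop t₀] with B hB
  simpa [mul_comm] using
    integral_mono_on hB intervalIntegrable_const (hg t₀ B) (fun t _ => hgm t)

theorem tendsto_integral_atBot_of_le (hg : ∀ a b, IntervalIntegrable g MeasureTheory.volume a b)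
    (hm : 0 < m) (hgm : ∀ t, m ≤ g t) (t₀ : ℝ) :
    Tendsto (fun A : ℝ => ∫ t in A..t₀, g t) atBot atTop := by
  have hlin : Tendsto (fun A : ℝ => m * (t₀ - A)) atBot atTop := by
    simpa [sub_eq_add_neg] using
      (tendsto_atTop_add_const_left atBot t₀ tendsto_neg_atBot_atTop).const_mul_atTop hm
  refine tendsto_atTop_mono' atBot ?_ hlin
  filter_upwards [eventually_le_atBot t₀] with A hA
  simpa [mul_comm] using
    integral_mono_on hA intervalIntegrable_const (hg A t₀) (fun t _ => hgm t)

end LowerBoundedIntegrals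

theorem monotoneOn_div_sqrt_sq_add_one :
    MonotoneOn (fun x : ℝ => x / √(x ^ 2 + 1)) (Set.Ici 0) := by
  intro x (hx : 0 ≤ x) y (hy : 0 ≤ y) hxy
  rw [div_le_div_iff₀ (by positivity) (by positivity)]
  have hsqrt {a : ℝ} (ha : 0 ≤ a) (b : ℝ) : a * √(b ^ 2 + 1) = √(a ^ 2 * (b ^ 2 + 1)) := by
    rw [sqrt_mul (by positivity), sqrt_sq ha]
  rw [hsqrt hx, hsqrt hy]
  apply sqrt_le_sqrt
  nlinarith [mul_le_mul hxy hxy hx hy]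

theorem le_of_monotone_of_eq_const_of_le {f : ℝ → ℝ} {a c : ℝ} (hmono : Monotone f)
    (hconst : ∀ t ≤ a, f t = c) (t : ℝ) : c ≤ f t := by
  rcases le_total t a with h | h
  · exact (hconst t h).ge
  · exact hconst a le_rfl ▸ hmono h

section DeSitter

variable {f : ℝ → ℝ} {H : ℝ}

theorem deriv_exp_const_mul :
    deriv (fun s => exp (H * s)) = fun s => H * exp (H * s) := by
  funext s
  rw [deriv_exp (by fun_prop), deriv_const_mul_field', deriv_id'']
  ring

theorem deriv_eq_mul_of_eq_exp (hdS : ∀ t, 0 < t → f t = exp (H * t)) {t : ℝ} (ht : 0 < t) :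
    deriv f t = H * f t := by
  have hev : f =ᶠ[𝓝 t] fun s => exp (H * s) :=
    eventually_of_mem (Ioi_mem_nhds ht) hdS
  rw [hev.deriv_eq, deriv_exp_const_mul, hdS t ht]

theorem deriv_deriv_eq_of_eq_exp (hdS : ∀ t, 0 < t → f t = exp (H * t)) {t : ℝ} (ht : 0 < t) :
    deriv (deriv f) t = H ^ 2 * exp (H * t) := by
  have hev : deriv f =ᶠ[𝓝 t] fun s => H * exp (H * s) :=
    eventually_of_mem (Ioi_mem_nhds ht) fun s hs => by
      rw [deriv_eq_mul_of_eq_exp hdS hs, hdS s hs]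
  rw [hev.deriv_eq, deriv_const_mul_field', deriv_exp_const_mul]
  ring

theorem integral_deriv_div_self_eq_of_eq_exp (hdS : ∀ t, 0 < t → f t = exp (H * t)) {a b : ℝ}
    (ha : 0 < a) (hab : a ≤ b) : ∫ t in a..b, deriv f t / f t = (b - a) * H := by
  rw [← smul_eq_mul, ← integral_const]
  refine integral_congr fun t ht => ?_
  have ht0 : 0 < t := ha.trans_le (Set.uIcc_of_le hab ▸ ht).1
  rw [deriv_eq_mul_of_eq_exp hdS ht0, mul_div_cancel_right₀ _ (hdS t ht0 ▸ exp_pos _).ne']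

end DeSitter

theorem inflationary_yet_complete_general (H c : ℝ) (hH : 0 < H) (hc0 : 0 < c)
    (f : ℝ → ℝ) (hmono : Monotone f)
    (hpast : ∀ t : ℝ, t ≤ -1 → f t = c)
    (hdS : ∀ t : ℝ, 0 ≤ t → f t = Real.exp (H * t)) :
    (∃ t₁ : ℝ, 0 < deriv (deriv f) t₁) ∧
    (∃ a b : ℝ, a < b ∧
      (1 / (b - a)) * ∫ t in a..b, deriv f t / f t = H) ∧
    0 < H ∧
    (∀ t : ℝ, c ≤ f t) ∧
    (∀ t₀ : ℝ,
      Tendsto (fun A : ℝ => ∫ t in A..t₀, f t) atBot atTop ∧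
      Tendsto (fun B : ℝ => ∫ t in t₀..B, f t) atTop atTop ∧
      Tendsto (fun A : ℝ => ∫ t in A..t₀, f t / Real.sqrt ((f t) ^ 2 + 1))
        atBot atTop ∧
      Tendsto (fun B : ℝ => ∫ t in t₀..B, f t / Real.sqrt ((f t) ^ 2 + 1))
        atTop atTop) := by
  have hdS' : ∀ t, 0 < t → f t = exp (H * t) := fun t ht => hdS t ht.le
  have hlb := le_of_monotone_of_eq_const_of_le hmono hpast
  have hf_pos t : 0 < f t := hc0.trans_le (hlb t)
  set g := fun x : ℝ => x / √(x ^ 2 + 1)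
  have hg_mono : Monotone (g ∘ f) := fun s t hst =>
    monotoneOn_div_sqrt_sq_add_one (hf_pos s).le (hf_pos t).le (hmono hst)
  have hg_lb t : g c ≤ g (f t) := monotoneOn_div_sqrt_sq_add_one hc0.le (hf_pos t).le (hlb t)
  have hgc_pos : 0 < g c := by positivity
  refine ⟨⟨1, ?_⟩, ⟨1, 2, one_lt_two, ?_⟩, hH, hlb, fun t₀ => ⟨?_, ?_, ?_, ?_⟩⟩
  · rw [deriv_deriv_eq_of_eq_exp hdS' one_pos]
    positivity
  · rw [integral_deriv_div_self_eq_of_eq_exp hdS' one_pos one_le_two]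
    norm_num
  · exact tendsto_integral_atBot_of_le (fun _ _ => hmono.intervalIntegrable) hc0 hlb t₀
  · exact tendsto_integral_atTop_of_le (fun _ _ => hmono.intervalIntegrable) hc0 hlb t₀
  · exact tendsto_integral_atBot_of_le (fun _ _ => hg_mono.intervalIntegrable) hgc_pos hg_lb t₀
  · exact tendsto_integral_atTop_of_le (fun _ _ => hg_mono.intervalIntegrable) hgc_pos hg_lb t₀

/-- The central counterexample: the loitering-then-de Sitter monster is
(i) inflationary (`f'' > 0` somewhere), (ii) has strictly positive averaged
Hubble parameter (equal to `H > 0`) over some compact interval, and yet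
(iii) is bounded below by `c > 0` so all four Sánchez completeness integrals
diverge, making the GFRW geodesically complete. -/
theorem inflationary_yet_complete (H c : ℝ) (hH : 0 < H) (hc0 : 0 < c)
    (hc1 : c < 1) (f : ℝ → ℝ) (hf : ContDiff ℝ 1 f) (hmono : Monotone f)
    (hpast : ∀ t : ℝ, t ≤ -1 → f t = c)
    (hdS : ∀ t : ℝ, 0 ≤ t → f t = Real.exp (H * t)) :
    (∃ t₁ : ℝ, 0 < deriv (deriv f) t₁) ∧
    (∃ a b : ℝ, a < b ∧
      (1 / (b - a)) * ∫ t in a..b, deriv f t / f t = H) ∧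
    0 < H ∧
    (∀ t : ℝ, c ≤ f t) ∧
    (∀ t₀ : ℝ,
      Tendsto (fun A : ℝ => ∫ t in A..t₀, f t) atBot atTop ∧
      Tendsto (fun B : ℝ => ∫ t in t₀..B, f t) atTop atTop ∧
      Tendsto (fun A : ℝ => ∫ t in A..t₀, f t / Real.sqrt ((f t) ^ 2 + 1))
        atBot atTop ∧
      Tendsto (fun B : ℝ => ∫ t in t₀..B, f t / Real.sqrt ((f t) ^ 2 + 1))
        atTop atTop) :=
  inflationary_yet_complete_general H c hH hc0 f hmono hpast hdS
end
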